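/- LRW response-distribution identity (from the proof of Lemma 17 of the paper): Assume the transcript is collision-free and j < 2^n, and fix a tweak τ_{j+1} ∈ 𝒯. Then the pushforward of the uniform probability distribution on the nonempty set V \ {x₁ ⊕ h(τ₁), …, x_j ⊕ h(τ_j)} under the map s ↦ E^{T_j}(s) ⊕ h(τ_{j+1}) is the uniform probability distribution on V \ {y₁ ⊕ h(τ₁) ⊕ h(τ_{j+1}), …, y_j ⊕ h(τ_j) ⊕ h(τ_{j+1})}. -/
import Mathlib


/-- The reprogrammed permutations `E^{T_i}` of the LRW hybrid argument:
`E^{T_0} = E` and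
`E^{T_i} = swap(E^{T_{i-1}}(x_i ⊕ h(τ_i)), y_i ⊕ h(τ_i)) ∘ E^{T_{i-1}}`. -/
def lrwReprog {V 𝒯 : Type*} [DecidableEq V] [Add V]
    (E : Equiv.Perm V) (h : 𝒯 → V) (τ : ℕ → 𝒯) (x y : ℕ → V) : ℕ → Equiv.Perm V
  | 0 => E
  | i + 1 =>
      Equiv.swap (lrwReprog E h τ x y i (x (i + 1) + h (τ (i + 1))))
          (y (i + 1) + h (τ (i + 1))) *
        lrwReprog E h τ x y i

lemma lrwReprog_spec {V 𝒯 : Type*} [DecidableEq V] [Add V]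
    (E : Equiv.Perm V) (h : 𝒯 → V) (τ : ℕ → 𝒯) (x y : ℕ → V) :
    ∀ j : ℕ,
      (∀ a b, 1 ≤ a → a ≤ j → 1 ≤ b → b ≤ j → a ≠ b → x a + h (τ a) ≠ x b + h (τ b)) →
      (∀ a b, 1 ≤ a → a ≤ j → 1 ≤ b → b ≤ j → a ≠ b → y a + h (τ a) ≠ y b + h (τ b)) →
      ∀ i, 1 ≤ i → i ≤ j → lrwReprog E h τ x y j (x i + h (τ i)) = y i + h (τ i) := by
  intro j
  induction j with
  | zero => intro _ _ i h1 h2; omega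
  | succ j ih =>
    intro hx hy i h1 h2
    have hxr : ∀ a b, 1 ≤ a → a ≤ j → 1 ≤ b → b ≤ j → a ≠ b →
        x a + h (τ a) ≠ x b + h (τ b) :=
      fun a b ha ha' hb hb' => hx a b ha (by omega) hb (by omega)
    have hyr : ∀ a b, 1 ≤ a → a ≤ j → 1 ≤ b → b ≤ j → a ≠ b →
        y a + h (τ a) ≠ y b + h (τ b) :=
      fun a b ha ha' hb hb' => hy a b ha (by omega) hb (by omega)
    show (Equiv.swap (lrwReprog E h τ x y j (x (j + 1) + h (τ (j + 1))))
        (y (j + 1) + h (τ (j + 1))) * lrwReprog E h τ x y j) (x i + h (τ i)) = _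
    rw [Equiv.Perm.mul_apply]
    rcases eq_or_lt_of_le h2 with rfl | hlt
    · exact Equiv.swap_apply_left _ _
    · have hij : i ≤ j := by omega
      rw [ih hxr hyr i h1 hij]
      refine Equiv.swap_apply_of_ne_of_ne ?_ ?_
      · intro hcontra
        have hinj := (lrwReprog E h τ x y j).injective
          (by rw [ih hxr hyr i h1 hij, hcontra] :
            lrwReprog E h τ x y j (x i + h (τ i)) =
            lrwReprog E h τ x y j (x (j + 1) + h (τ (j + 1))))
        exact hx i (j + 1) h1 (by omega) (by omega) le_rfl (by omega) hinj
      · exact hy i (j + 1) h1 (by omega) (by omega) le_rfl (by omega)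

lemma map_uniformOfFinset_equiv {α β : Type*} [DecidableEq β]
    (e : α ≃ β) (s : Finset α) (hs : s.Nonempty) :
    PMF.map e (PMF.uniformOfFinset s hs) =
      PMF.uniformOfFinset (s.image e) (hs.image e) := by
  ext b
  rw [PMF.map_apply, PMF.uniformOfFinset_apply]
  rw [tsum_eq_single (e.symm b) (by
    intro a ha
    simp only [ite_eq_right_iff]
    intro hb
    exact absurd (by simp [hb]) ha)]
  simp only [Equiv.apply_symm_apply, if_true, PMF.uniformOfFinset_apply]
  rw [Finset.card_image_of_injective _ e.injective]
  congr 1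
  rw [eq_iff_iff]
  simp only [Finset.mem_image]
  constructor
  · intro hm; exact ⟨_, hm, e.apply_symm_apply b⟩
  · rintro ⟨a, ha, rfl⟩; simpa using ha

lemma uniformOfFinset_congr {α : Type*} {s t : Finset α} (hst : s = t)
    (hs : s.Nonempty) (ht : t.Nonempty) :
    PMF.uniformOfFinset s hs = PMF.uniformOfFinset t ht := by
  subst hst; rfl

/-- LRW response-distribution identity (from the proof of Lemma 17): if the
transcript is collision-free and `j < 2^n`, then for any tweak `τ_{j+1}`, pushing
the uniform distribution on `V \ {x₁ ⊕ h(τ₁), …, x_j ⊕ h(τ_j)}` forward along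
`s ↦ E^{T_j}(s) ⊕ h(τ_{j+1})` gives the uniform distribution on
`V \ {y₁ ⊕ h(τ₁) ⊕ h(τ_{j+1}), …, y_j ⊕ h(τ_j) ⊕ h(τ_{j+1})}`. -/
theorem lrw_response_distribution {n j : ℕ} (hn : 1 ≤ n) {𝒯 : Type*}
    (E : Equiv.Perm (Fin n → ZMod 2)) (h : 𝒯 → Fin n → ZMod 2)
    (τ : ℕ → 𝒯) (x y : ℕ → Fin n → ZMod 2)
    (hx : ∀ a b, 1 ≤ a → a ≤ j → 1 ≤ b → b ≤ j → a ≠ b →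
      x a + h (τ a) ≠ x b + h (τ b))
    (hy : ∀ a b, 1 ≤ a → a ≤ j → 1 ≤ b → b ≤ j → a ≠ b →
      y a + h (τ a) ≠ y b + h (τ b))
    (hj : j < 2 ^ n) :
    ∀ (hS : (Finset.univ \ (Finset.Icc 1 j).image (fun i => x i + h (τ i))).Nonempty)
      (hT : (Finset.univ \
        (Finset.Icc 1 j).image (fun i => y i + h (τ i) + h (τ (j + 1)))).Nonempty),
      PMF.map (fun s => lrwReprog E h τ x y j s + h (τ (j + 1)))
          (PMF.uniformOfFinset
            (Finset.univ \ (Finset.Icc 1 j).image (fun i => x i + h (τ i))) hS) =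
        PMF.uniformOfFinset
          (Finset.univ \
            (Finset.Icc 1 j).image (fun i => y i + h (τ i) + h (τ (j + 1)))) hT := by
  intro hS hT
  set F := lrwReprog E h τ x y j with hF
  set c := h (τ (j + 1)) with hc
  let e : (Fin n → ZMod 2) ≃ (Fin n → ZMod 2) := F.trans (Equiv.addRight c)
  have hcoe : (fun s => F s + c) = ⇑e := rfl
  rw [hcoe, map_uniformOfFinset_equiv]
  apply uniformOfFinset_congr
  rw [Finset.image_sdiff _ _ e.injective, Finset.image_univ_equiv]
  congr 1
  rw [Finset.image_image]
  apply Finset.image_congr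
  intro i hi
  simp only [Finset.coe_Icc, Set.mem_Icc] at hi
  show e (x i + h (τ i)) = y i + h (τ i) + c
  show F (x i + h (τ i)) + c = y i + h (τ i) + c
  rw [lrwReprog_spec E h τ x y j hx hy i hi.1 hi.2]
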